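/- For every positive integer n and every integer a with 0 ≤ a ≤ n, there exists an orientation of the n-cube in which every vertex has in-degree a or n − a. Concretely, orienting each edge that flips coordinate i toward the endpoint of even parity when 1 ≤ i ≤ a and toward the endpoint of odd parity when a < i ≤ n gives every even-parity vertex in-degree a and every odd-parity vertex in-degree n − a. -/

import Mathlib

/-- Flip coordinate `i` of a binary `n`-tuple. -/
def flipBit {n : ℕ} (v : Fin n → ZMod 2) (i : Fin n) : Fin n → ZMod 2 :=
  Function.update v i (v i + 1)

/-- An orientation of the `n`-cube: to each edge (a pair of vertices differing in
exactly one coordinate) we assign a head, one of its two endpoints.  The edge at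
vertex `v` in direction `i` joins `v` and `flipBit v i`; `head v i` is the
assigned head of that edge, which must be one of the endpoints and must not
depend on from which endpoint the edge is viewed. -/
structure CubeOrientation (n : ℕ) where
  head : (Fin n → ZMod 2) → Fin n → (Fin n → ZMod 2)
  head_mem : ∀ v i, head v i = v ∨ head v i = flipBit v i
  compatible : ∀ v i, head (flipBit v i) i = head v i

/-- The in-degree of a vertex `v`: the number of edges incident to `v`
whose head is `v`. -/
def CubeOrientation.inDeg {n : ℕ} (o : CubeOrientation n) (v : Fin n → ZMod 2) : ℕ :=
  (Finset.univ.filter fun i : Fin n => o.head v i = v).card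

/-- The parity of a vertex: the sum of its coordinates modulo 2. -/
def parity {n : ℕ} (v : Fin n → ZMod 2) : ZMod 2 := ∑ i, v i

/-!
Orient every edge in direction `i` towards its endpoint of a prescribed parity `c i`; this is
well defined because the two endpoints of an edge have different parities. A vertex `v` is then
the head of exactly the edges in the directions `i` with `c i = parity v`. Taking `c i = 0` for
the first `a` directions and `c i = 1` for the others gives in-degree `a` at even vertices and
`n - a` at odd ones.
-/

open Finset

section FlipBit

variable {n : ℕ} (v : Fin n → ZMod 2) (i : Fin n)

lemma flipBit_ne_self : flipBit v i ≠ v := fun h => by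
  simpa [flipBit] using congrFun h i

lemma flipBit_flipBit : flipBit (flipBit v i) i = v := by
  ext j
  rcases eq_or_ne j i with rfl | hj
  · simp [flipBit, add_assoc, CharTwo.add_self_eq_zero]
  · simp [flipBit, hj]

lemma parity_flipBit : parity (flipBit v i) = parity v + 1 := by
  simp only [parity, flipBit, sum_update_of_mem (mem_univ i),
    sum_eq_add_sum_sdiff_singleton_of_mem (mem_univ i) v]
  ring

lemma parity_flipBit_eq_iff {x : ZMod 2} : parity (flipBit v i) = x ↔ parity v ≠ x := by
  rw [parity_flipBit]
  generalize parity v = p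
  decide +revert

end FlipBit

lemma Fin.card_filter_le_val (n m : ℕ) : #{i : Fin n | m ≤ (i : ℕ)} = n - m := by
  have := card_filter_add_card_filter_not (s := univ) (p := fun i : Fin n => (i : ℕ) < m)
  simp only [not_lt, card_univ, Fintype.card_fin, Fin.card_filter_val_lt] at this
  omega

namespace CubeOrientation

variable {n : ℕ}

def ofHeadParity (c : Fin n → ZMod 2) : CubeOrientation n where
  head v i := if parity v = c i then v else flipBit v i
  head_mem v i := by split_ifs <;> simp
  compatible v i := by
    by_cases h : parity v = c i <;> simp [h, parity_flipBit_eq_iff, flipBit_flipBit]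

variable (c : Fin n → ZMod 2) (v : Fin n → ZMod 2)

lemma parity_head_ofHeadParity (i : Fin n) : parity ((ofHeadParity c).head v i) = c i := by
  by_cases h : parity v = c i
  · simp [ofHeadParity, h]
  · simp [ofHeadParity, h, parity_flipBit_eq_iff]

lemma inDeg_ofHeadParity : (ofHeadParity c).inDeg v = #{i | c i = parity v} := by
  refine congrArg card (filter_congr fun i _ => ?_)
  by_cases h : parity v = c i <;> simp [ofHeadParity, h, (flipBit_ne_self v i).symm, eq_comm]

end CubeOrientation

theorem hypercube_complementary_indegrees_general (n : ℕ) (a : ℤ)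
    (ha0 : 0 ≤ a) (han : a ≤ n) :
    ∃ o : CubeOrientation n,
      (∀ v i, parity (o.head v i) = if (i : ℤ) < a then 0 else 1) ∧
      (∀ v, parity v = 0 → (o.inDeg v : ℤ) = a) ∧
      (∀ v, parity v = 1 → (o.inDeg v : ℤ) = n - a) := by
  lift a to ℕ using ha0
  refine ⟨.ofHeadParity fun i => if (i : ℤ) < a then 0 else 1,
    CubeOrientation.parity_head_ofHeadParity _, fun v hv => ?_, fun v hv => ?_⟩ <;>
    rw [CubeOrientation.inDeg_ofHeadParity, hv]
  · simp only [Nat.cast_lt, ite_eq_left_iff, one_ne_zero, imp_false, not_not,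
      Fin.card_filter_val_lt]
    omega
  · simp only [Nat.cast_lt, ite_eq_right_iff, zero_ne_one, imp_false, not_lt,
      Fin.card_filter_le_val]
    omega

theorem hypercube_complementary_indegrees (n : ℕ) (hn : 0 < n) (a : ℤ)
    (ha0 : 0 ≤ a) (han : a ≤ n) :
    ∃ o : CubeOrientation n,
      (∀ v i, parity (o.head v i) = if (i : ℤ) < a then 0 else 1) ∧
      (∀ v, parity v = 0 → (o.inDeg v : ℤ) = a) ∧
      (∀ v, parity v = 1 → (o.inDeg v : ℤ) = n - a) :=
  hypercube_complementary_indegrees_general n a ha0 han
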